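/- Let X and Y be normed spaces and T_k ∈ B(X,Y). The weak summing operator S : M^∞_{wR}(∑_k T_k) → Y, assigning to each x the weak Riesz sum of ∑_k T_k x_k, is a bounded linear operator if and only if ∑_k T_k is c_0(X)-multiplier Cauchy. -/

import Mathlib

open Filter Finset Topology BoundedContinuousFunction

/-- A series `∑ s k` is weakly Riesz convergent to `l` if for every continuous
linear functional `φ`, the Riesz means of `φ` of the partial sums tend to `φ l`. -/
def WeakRieszSeriesConvTo {Y : Type*} [NormedAddCommGroup Y] [NormedSpace ℝ Y]
    (r : ℕ → ℝ) (s : ℕ → Y) (l : Y) : Prop :=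
  ∀ φ : Y →L[ℝ] ℝ,
    Tendsto (fun n => (∑ k ∈ Finset.range (n + 1), r k)⁻¹ *
        ∑ k ∈ Finset.range (n + 1), r k * φ (∑ j ∈ Finset.range (k + 1), s j))
      atTop (𝓝 (φ l))

/-! If `S` is bounded by `C`, a block `∑_{N ≤ k < n} Tₖ xₖ` is the weak Riesz sum of `x`
truncated to `[N, n)`, so its norm is at most `C · sup_{k ≥ N} ‖xₖ‖`, which tends to `0` for a
null sequence `x`. Conversely, a gliding hump argument shows that a c₀-multiplier Cauchy series
has partial sums `∑_{k<n} Tₖ xₖ` bounded by `C · sup ‖xₖ‖`; testing the Riesz means of the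
partial sums against a norming functional bounds the weak Riesz sum by the same constant. -/

noncomputable def rieszMean (r a : ℕ → ℝ) (n : ℕ) : ℝ :=
  (∑ k ∈ range (n + 1), r k)⁻¹ * ∑ k ∈ range (n + 1), r k * a k

section RieszMean

variable {r a : ℕ → ℝ}

theorem rieszMean_le (hr : ∀ k, 0 ≤ r k) {n : ℕ} (hRn : 0 < ∑ k ∈ range (n + 1), r k)
    {B : ℝ} (ha : ∀ k, a k ≤ B) : rieszMean r a n ≤ B := by
  rw [rieszMean, inv_mul_le_iff₀ hRn, sum_mul]
  exact sum_le_sum fun k _ => mul_le_mul_of_nonneg_left (ha k) (hr k)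

theorem tendsto_rieszMean_of_eventually_eq
    (hR : Tendsto (fun n => ∑ k ∈ range n, r k) atTop atTop) {c : ℝ}
    (ha : ∀ᶠ k in atTop, a k = c) : Tendsto (rieszMean r a) atTop (𝓝 c) := by
  obtain ⟨n₀, hn₀⟩ := eventually_atTop.1 ha
  set D := ∑ k ∈ range n₀, r k * (a k - c)
  have hR' : Tendsto (fun n => ∑ k ∈ range (n + 1), r k) atTop atTop :=
    hR.comp (tendsto_add_atTop_nat 1)
  have hsplit : ∀ n ≥ n₀,
      ∑ k ∈ range (n + 1), r k * a k = (∑ k ∈ range (n + 1), r k) * c + D := by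
    intro n hn
    have htail : ∑ k ∈ range (n + 1), r k * (a k - c) = D :=
      (sum_subset (range_subset_range.2 (by omega)) fun k _ hk => by
        rw [hn₀ k (by simpa using hk), sub_self, mul_zero]).symm
    rw [← htail, sum_mul, ← sum_add_distrib]
    exact sum_congr rfl fun k _ => by ring
  have hlim : Tendsto (fun n => c + (∑ k ∈ range (n + 1), r k)⁻¹ * D) atTop (𝓝 c) := by
    simpa using ((tendsto_inv_atTop_zero.comp hR').mul_const D).const_add c
  refine hlim.congr' ?_
  filter_upwards [eventually_ge_atTop n₀, hR'.eventually_ne_atTop 0] with n hn hRn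
  rw [rieszMean, hsplit n hn, mul_add, inv_mul_cancel_left₀ hRn]

end RieszMean

section WeakRiesz

variable {Y : Type*} [NormedAddCommGroup Y] [NormedSpace ℝ Y] {r : ℕ → ℝ} {s : ℕ → Y} {l : Y}

theorem weakRieszSeriesConvTo_of_eventually_eq
    (hR : Tendsto (fun n => ∑ k ∈ range n, r k) atTop atTop)
    (hs : ∀ᶠ k in atTop, ∑ j ∈ range (k + 1), s j = l) : WeakRieszSeriesConvTo r s l :=
  fun φ => tendsto_rieszMean_of_eventually_eq hR (hs.mono fun _ hk => by rw [hk])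

theorem norm_le_of_weakRieszSeriesConvTo (hr : ∀ k, 0 ≤ r k)
    (hR : Tendsto (fun n => ∑ k ∈ range n, r k) atTop atTop) {B : ℝ}
    (hs : ∀ k, ‖∑ j ∈ range (k + 1), s j‖ ≤ B) (hl : WeakRieszSeriesConvTo r s l) :
    ‖l‖ ≤ B := by
  obtain ⟨φ, hφ, hφl⟩ := exists_dual_vector'' ℝ l
  have hpos : ∀ᶠ n in atTop, 0 < ∑ k ∈ range (n + 1), r k :=
    (hR.comp (tendsto_add_atTop_nat 1)).eventually_gt_atTop 0
  have hφs : ∀ k, φ (∑ j ∈ range (k + 1), s j) ≤ B := fun k =>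
    (le_abs_self _).trans <| (φ.le_of_opNorm_le hφ _).trans <| by simpa using hs k
  simpa [hφl] using le_of_tendsto (hl φ) (hpos.mono fun n hn => rieszMean_le hr hn hφs)

end WeakRiesz

def blockIndex (g : ℕ → ℕ) (k : ℕ) : ℕ := Nat.findGreatest (fun j => g j ≤ k) k

section BlockIndex

variable {g : ℕ → ℕ}

theorem blockIndex_eq_of_mem_Ico (hg : StrictMono g) {j k : ℕ} (hk : k ∈ Ico (g j) (g (j + 1))) :
    blockIndex g k = j := by
  obtain ⟨hjk, hkj⟩ := mem_Ico.1 hk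
  have hj : j ≤ k := hg.le_apply.trans hjk
  refine le_antisymm ?_ (Nat.le_findGreatest hj hjk)
  by_contra! hlt
  have hspec : g (blockIndex g k) ≤ k := Nat.findGreatest_spec (P := fun j => g j ≤ k) hj hjk
  have hmono : g (j + 1) ≤ g (blockIndex g k) := hg.monotone hlt
  omega

theorem tendsto_blockIndex (hg : StrictMono g) : Tendsto (blockIndex g) atTop atTop :=
  tendsto_atTop_atTop.2 fun J => ⟨g J, fun _ hk => Nat.le_findGreatest (hg.le_apply.trans hk) hk⟩

end BlockIndex

def IsC0MultiplierCauchy {X Y : Type*} [NormedAddCommGroup X] [NormedSpace ℝ X]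
    [NormedAddCommGroup Y] [NormedSpace ℝ Y] (T : ℕ → X →L[ℝ] Y) : Prop :=
  ∀ x : ℕ → X, Tendsto x atTop (𝓝 0) → CauchySeq (fun n => ∑ k ∈ range n, T k (x k))

section Multiplier

variable {X Y : Type*} [NormedAddCommGroup X] [NormedSpace ℝ X]
  [NormedAddCommGroup Y] [NormedSpace ℝ Y] {T : ℕ → X →L[ℝ] Y}

theorem norm_sum_le_sum_opNorm {x : ℕ → X} (hx : ∀ k, ‖x k‖ ≤ 1) (s : Finset ℕ) :
    ‖∑ k ∈ s, T k (x k)‖ ≤ ∑ k ∈ s, ‖T k‖ :=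
  (norm_sum_le _ _).trans <| sum_le_sum fun k _ =>
    ((T k).le_of_opNorm_le_of_le le_rfl (hx k)).trans_eq (mul_one _)

theorem norm_sum_le_mul_of_norm_le_one {n : ℕ} {C : ℝ}
    (hC : ∀ x : ℕ → X, (∀ k, ‖x k‖ ≤ 1) → ‖∑ k ∈ range n, T k (x k)‖ ≤ C)
    {x : ℕ → X} {M : ℝ} (hx : ∀ k, ‖x k‖ ≤ M) : ‖∑ k ∈ range n, T k (x k)‖ ≤ C * M := by
  rcases ((norm_nonneg _).trans (hx 0)).eq_or_lt with rfl | hM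
  · simp [fun k => norm_le_zero_iff.1 (hx k)]
  have hx' : ∀ k, ‖M⁻¹ • x k‖ ≤ 1 := fun k => by
    rw [norm_smul, Real.norm_of_nonneg (inv_nonneg.2 hM.le), inv_mul_le_one₀ hM]
    exact hx k
  have := hC _ hx'
  simp only [map_smul, ← smul_sum, norm_smul, Real.norm_of_nonneg (inv_nonneg.2 hM.le),
    inv_mul_le_iff₀ hM] at this
  linarith

-- The first `N` terms contribute at most `∑_{k<N} ‖Tₖ‖`, so the tails must be large.
theorem exists_lt_norm_sum_Ico
    (hunb : ∀ C > 0, ∃ n, ∃ x : ℕ → X, (∀ k, ‖x k‖ ≤ 1) ∧ C < ‖∑ k ∈ range n, T k (x k)‖)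
    (N : ℕ) (M : ℝ) :
    ∃ n, N < n ∧ ∃ x : ℕ → X, (∀ k, ‖x k‖ ≤ 1) ∧ M < ‖∑ k ∈ Ico N n, T k (x k)‖ := by
  set H := ∑ k ∈ range N, ‖T k‖
  have hH : 0 ≤ H := sum_nonneg fun k _ => norm_nonneg _
  obtain ⟨n, x, hx, hn⟩ := hunb (max M 0 + H + 1) (by positivity)
  have hhead : ∀ m ≤ N, ‖∑ k ∈ range m, T k (x k)‖ ≤ H := fun m hm =>
    (norm_sum_le_sum_opNorm hx _).trans <|
      sum_le_sum_of_subset_of_nonneg (range_subset_range.2 hm) fun k _ _ => norm_nonneg _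
  have hNn : N < n := by
    by_contra! hn'
    linarith [hhead n hn', le_max_right M 0]
  refine ⟨n, hNn, x, hx, ?_⟩
  rw [← sum_range_add_sum_Ico _ hNn.le] at hn
  linarith [norm_add_le (∑ k ∈ range N, T k (x k)) (∑ k ∈ Ico N n, T k (x k)),
    hhead N le_rfl, le_max_left M 0]

-- Gliding hump: consecutive blocks with sums of norm `> j + 1`, scaled by `1 / (j + 1)`,
-- form a null sequence whose partial sums are not Cauchy.
theorem not_isC0MultiplierCauchy_of_forall_exists_lt_norm_sum_Ico
    (hump : ∀ (N : ℕ) (M : ℝ),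
      ∃ n, N < n ∧ ∃ x : ℕ → X, (∀ k, ‖x k‖ ≤ 1) ∧ M < ‖∑ k ∈ Ico N n, T k (x k)‖) :
    ¬IsC0MultiplierCauchy T := by
  choose n hNn x hx hsum using hump
  let g : ℕ → ℕ := fun j => Nat.rec 0 (fun j gj => n gj (j + 1)) j
  have hg : StrictMono g := strictMono_nat_of_lt_succ fun j => hNn (g j) (j + 1)
  let idx := blockIndex g
  let z : ℕ → X := fun k => ((idx k : ℝ) + 1)⁻¹ • x (g (idx k)) (idx k + 1) k
  have hz : Tendsto z atTop (𝓝 0) := by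
    refine squeeze_zero_norm (fun k => ?_) <| (tendsto_inv_atTop_zero.comp <|
      tendsto_atTop_add_const_right _ 1 tendsto_natCast_atTop_atTop).comp (tendsto_blockIndex hg)
    rw [norm_smul, Real.norm_of_nonneg (by positivity)]
    exact mul_le_of_le_one_right (by positivity) (hx _ _ _)
  have hblock : ∀ j, ∑ k ∈ Ico (g j) (g (j + 1)), T k (z k) =
      ((j : ℝ) + 1)⁻¹ • ∑ k ∈ Ico (g j) (g (j + 1)), T k (x (g j) (j + 1) k) := fun j => by
    rw [smul_sum]
    refine sum_congr rfl fun k hk => ?_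
    simp only [z, idx, blockIndex_eq_of_mem_Ico hg hk, map_smul]
  intro hc
  obtain ⟨N, hN⟩ := Metric.cauchySeq_iff.1 (hc z hz) 1 one_pos
  have hdist := hN _ (hg.le_apply.trans (hg.monotone N.le_succ)) _ hg.le_apply
  rw [dist_eq_norm, ← sum_Ico_eq_sub _ (hg.monotone N.le_succ), hblock, norm_smul,
    Real.norm_of_nonneg (by positivity), inv_mul_lt_iff₀ (by positivity), mul_one] at hdist
  exact (hsum (g N) (N + 1)).not_gt hdist

theorem IsC0MultiplierCauchy.exists_norm_sum_le (h : IsC0MultiplierCauchy T) :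
    ∃ C > 0, ∀ n (x : ℕ → X), (∀ k, ‖x k‖ ≤ 1) → ‖∑ k ∈ range n, T k (x k)‖ ≤ C := by
  by_contra! hunb
  exact not_isC0MultiplierCauchy_of_forall_exists_lt_norm_sum_Ico (exists_lt_norm_sum_Ico hunb) h

end Multiplier

section WeakSummingOperator

variable {X Y : Type*} [NormedAddCommGroup X] [NormedSpace ℝ X]
  [NormedAddCommGroup Y] [NormedSpace ℝ Y] {r : ℕ → ℝ} {T : ℕ → X →L[ℝ] Y} {C : ℝ}

theorem norm_sum_Ico_le_of_weakRieszSeriesConvTo_bound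
    (hR : Tendsto (fun n => ∑ k ∈ range n, r k) atTop atTop) (hC : 0 ≤ C)
    (hbd : ∀ f : ℕ →ᵇ X, ∀ y0 : Y,
      WeakRieszSeriesConvTo r (fun k => T k (f k)) y0 → ‖y0‖ ≤ C * ‖f‖)
    {x : ℕ → X} {N n : ℕ} {δ : ℝ} (hδ : 0 ≤ δ) (hx : ∀ k ∈ Ico N n, ‖x k‖ ≤ δ) :
    ‖∑ k ∈ Ico N n, T k (x k)‖ ≤ C * δ := by
  have hxδ : ∀ k, ‖if k ∈ Ico N n then x k else 0‖ ≤ δ := fun k => by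
    split_ifs with hk
    exacts [hx k hk, norm_zero.trans_le hδ]
  let f : ℕ →ᵇ X := ofNormedAddCommGroup _ continuous_of_discreteTopology δ hxδ
  have hf : ∀ m ≥ n, ∑ k ∈ range m, T k (f k) = ∑ k ∈ Ico N n, T k (x k) := fun m hm => by
    have hsub : Ico N n ⊆ range m := fun k hk => mem_range.2 ((mem_Ico.1 hk).2.trans_le hm)
    simp only [f, coe_ofNormedAddCommGroup, apply_ite (T _), map_zero, sum_ite_mem,
      inter_eq_right.2 hsub]
  have hw : WeakRieszSeriesConvTo r (fun k => T k (f k)) (∑ k ∈ Ico N n, T k (x k)) :=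
    weakRieszSeriesConvTo_of_eventually_eq hR <|
      (eventually_ge_atTop n).mono fun k hk => hf (k + 1) (by omega)
  exact (hbd f _ hw).trans <|
    mul_le_mul_of_nonneg_left (norm_ofNormedAddCommGroup_le _ hδ hxδ) hC

theorem isC0MultiplierCauchy_of_weakRieszSeriesConvTo_bound
    (hR : Tendsto (fun n => ∑ k ∈ range n, r k) atTop atTop) (hC : 0 < C)
    (hbd : ∀ f : ℕ →ᵇ X, ∀ y0 : Y,
      WeakRieszSeriesConvTo r (fun k => T k (f k)) y0 → ‖y0‖ ≤ C * ‖f‖) :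
    IsC0MultiplierCauchy T := by
  intro x hx
  refine Metric.cauchySeq_iff'.2 fun ε hε => ?_
  have hδ : 0 < ε / (2 * C) := by positivity
  obtain ⟨N, hN⟩ := Metric.tendsto_atTop.1 hx _ hδ
  refine ⟨N, fun n hn => ?_⟩
  rw [dist_eq_norm, ← sum_Ico_eq_sub _ hn]
  calc ‖∑ k ∈ Ico N n, T k (x k)‖ ≤ C * (ε / (2 * C)) :=
        norm_sum_Ico_le_of_weakRieszSeriesConvTo_bound hR hC.le hbd hδ.le fun k hk => by
          simpa using (hN k (mem_Ico.1 hk).1).le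
    _ = ε / 2 := by field_simp
    _ < ε := half_lt_self hε

end WeakSummingOperator

theorem weak_summing_operator_continuous_iff_c0_multiplier_cauchy_general
    {X Y : Type*} [NormedAddCommGroup X] [NormedSpace ℝ X]
    [NormedAddCommGroup Y] [NormedSpace ℝ Y]
    (r : ℕ → ℝ) (hr : ∀ k, 0 ≤ r k)
    (hR : Tendsto (fun n => ∑ k ∈ Finset.range n, r k) atTop atTop)
    (T : ℕ → X →L[ℝ] Y) :
    (∃ C > 0, ∀ f : ℕ →ᵇ X, ∀ y0 : Y,
        WeakRieszSeriesConvTo r (fun k => T k (f k)) y0 → ‖y0‖ ≤ C * ‖f‖) ↔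
    (∀ x : ℕ → X, Tendsto x atTop (𝓝 0) →
        CauchySeq (fun n => ∑ k ∈ Finset.range n, T k (x k))) := by
  refine ⟨fun ⟨C, hC, hbd⟩ => isC0MultiplierCauchy_of_weakRieszSeriesConvTo_bound hR hC hbd,
    fun hc => ?_⟩
  obtain ⟨C, hC, hbd⟩ := IsC0MultiplierCauchy.exists_norm_sum_le hc
  exact ⟨C, hC, fun f y0 hy0 => norm_le_of_weakRieszSeriesConvTo hr hR
    (fun k => norm_sum_le_mul_of_norm_le_one (hbd (k + 1)) f.norm_coe_le_norm) hy0⟩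

/-- The weak summing operator `S : M^∞_{wR}(∑ T k) → Y`, sending `x` to the weak
Riesz sum of `∑ T k x k`, is bounded (continuous) iff `∑ T k` is
`c₀(X)`-multiplier Cauchy. -/
theorem weak_summing_operator_continuous_iff_c0_multiplier_cauchy
    {X Y : Type*} [NormedAddCommGroup X] [NormedSpace ℝ X]
    [NormedAddCommGroup Y] [NormedSpace ℝ Y]
    (r : ℕ → ℝ) (hr0 : 0 < r 0) (hr : ∀ k, 0 ≤ r k)
    (hR : Tendsto (fun n => ∑ k ∈ Finset.range n, r k) atTop atTop)
    (T : ℕ → X →L[ℝ] Y) :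
    (∃ C > 0, ∀ f : ℕ →ᵇ X, ∀ y0 : Y,
        WeakRieszSeriesConvTo r (fun k => T k (f k)) y0 → ‖y0‖ ≤ C * ‖f‖) ↔
    (∀ x : ℕ → X, Tendsto x atTop (𝓝 0) →
        CauchySeq (fun n => ∑ k ∈ Finset.range n, T k (x k))) :=
  weak_summing_operator_continuous_iff_c0_multiplier_cauchy_general r hr hR T
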